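/- arXiv:2010.04778 — 4 statements merged into one kernel-verified Lean document; each statement's English description precedes it below -/
import Mathlib

section
/- For every reciprocal PC matrix C, the Koczkodaj inconsistency index satisfies 0 ≤ KI(C) < 1. -/
/-! Each triple contributes `min |1 - x| |1 - x⁻¹|` with `x = c_ij / (c_ik c_kj) > 0`, and whichever
of `x`, `x⁻¹` lies in `(0, 1]` makes the corresponding term lie in `[0, 1)`. A finite supremum of
such terms stays in `[0, 1)`. -/

open Finset

noncomputable def KI {n : ℕ} (C : Matrix (Fin n) (Fin n) ℝ) : ℝ :=
  ⨆ i : Fin n, ⨆ j : Fin n, ⨆ k : Fin n,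
    min |1 - C i j / (C i k * C k j)| |1 - (C i k * C k j) / C i j|

lemma min_abs_one_sub_abs_one_sub_inv_lt_one {x : ℝ} (hx : 0 < x) :
    min |1 - x| |1 - x⁻¹| < 1 := by
  rcases le_or_gt x 1 with hle | hgt
  · calc min |1 - x| |1 - x⁻¹| ≤ |1 - x| := min_le_left _ _
      _ = 1 - x := abs_of_nonneg (by linarith)
      _ < 1 := by linarith
  · have hinv_pos : 0 < x⁻¹ := inv_pos.mpr hx
    have hinv_lt : x⁻¹ < 1 := inv_lt_one_of_one_lt₀ hgt
    calc min |1 - x| |1 - x⁻¹| ≤ |1 - x⁻¹| := min_le_right _ _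
      _ = 1 - x⁻¹ := abs_of_nonneg (by linarith)
      _ < 1 := by linarith

/-- The hypothesis `0 < a` covers the empty index type, where `⨆ i, f i = 0` for real `f`. -/
lemma Real.iSup_lt_of_forall_lt {ι : Type*} [Finite ι] {f : ι → ℝ} {a : ℝ} (ha : 0 < a)
    (hf : ∀ i, f i < a) : ⨆ i, f i < a := by
  cases isEmpty_or_nonempty ι
  · simpa only [Real.iSup_of_isEmpty] using ha
  · obtain ⟨i, hi⟩ := Finite.exists_max f
    exact (ciSup_le hi).trans_lt (hf i)

lemma triad_term_lt_one {a b c : ℝ} (ha : 0 < a) (hb : 0 < b) (hc : 0 < c) :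
    min |1 - a / (b * c)| |1 - (b * c) / a| < 1 := by
  rw [← inv_div a (b * c)]
  exact min_abs_one_sub_abs_one_sub_inv_lt_one (by positivity)

theorem KI_nonneg_lt_one_general {n : ℕ} (C : Matrix (Fin n) (Fin n) ℝ)
    (hpos : ∀ i j, 0 < C i j) :
    0 ≤ KI C ∧ KI C < 1 := by
  constructor
  · exact Real.iSup_nonneg fun i => Real.iSup_nonneg fun j => Real.iSup_nonneg fun k =>
      le_min (abs_nonneg _) (abs_nonneg _)
  · exact Real.iSup_lt_of_forall_lt one_pos fun i =>
      Real.iSup_lt_of_forall_lt one_pos fun j => Real.iSup_lt_of_forall_lt one_pos fun k =>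
        triad_term_lt_one (hpos i j) (hpos i k) (hpos k j)

theorem KI_nonneg_lt_one {n : ℕ} (hn : 2 < n) (C : Matrix (Fin n) (Fin n) ℝ)
    (hpos : ∀ i j, 0 < C i j) (hdiag : ∀ i, C i i = 1)
    (hrec : ∀ i j, C i j * C j i = 1) :
    0 ≤ KI C ∧ KI C < 1 :=
  KI_nonneg_lt_one_general C hpos
end

section
/- For the geometric mean method priority vector w_gm of a reciprocal PC matrix C with κ = 1 − KI(C) > 0, it holds for all i, j that κ·c_{ji} ≤ w_gm(a_j)/w_gm(a_i) ≤ (1/κ)·c_{ji}. -/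
open Finset

/-!
Fixing `i` and `j`, each factor `c_{jr} / c_{ir}` of the ratio of geometric means equals
`u_r * c_{ji}` with `u_r = c_{jr} / (c_{ji} c_{ir})`, and the triple `(j, r, i)` in the definition
of `KI` gives `min |1 - u_r| |1 - u_r⁻¹| ≤ 1 - κ`, which forces `κ ≤ u_r ≤ κ⁻¹`. Hence every
factor lies in `[κ c_{ji}, κ⁻¹ c_{ji}]`, and so does their geometric mean `w_j / w_i`.
-/

lemma le_KI {n : ℕ} (C : Matrix (Fin n) (Fin n) ℝ) (i j k : Fin n) :
    min |1 - C i j / (C i k * C k j)| |1 - (C i k * C k j) / C i j| ≤ KI C :=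
  le_ciSup_of_le (Finite.bddAbove_range _) i <| le_ciSup_of_le (Finite.bddAbove_range _) j <|
    le_ciSup (Finite.bddAbove_range
      fun k => min |1 - C i j / (C i k * C k j)| |1 - (C i k * C k j) / C i j|) k

lemma mem_Icc_inv_of_abs_one_sub_le {κ u : ℝ} (hκ : 0 < κ) (h : |1 - u| ≤ 1 - κ) :
    u ∈ Set.Icc κ κ⁻¹ := by
  rw [abs_le] at h
  have hκ_mul : κ * (2 - κ) ≤ 1 := by nlinarith [sq_nonneg (1 - κ)]
  refine ⟨by linarith, ?_⟩
  calc u ≤ 2 - κ := by linarith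
    _ ≤ κ⁻¹ := by rwa [← mul_one κ⁻¹, le_inv_mul_iff₀ hκ]

lemma mem_Icc_inv_of_min_abs_one_sub_le {κ u : ℝ} (hκ : 0 < κ) (hu : 0 < u)
    (h : min |1 - u| |1 - u⁻¹| ≤ 1 - κ) : u ∈ Set.Icc κ κ⁻¹ := by
  rcases min_le_iff.mp h with h | h
  · exact mem_Icc_inv_of_abs_one_sub_le hκ h
  · obtain ⟨hκ_le, hle_inv⟩ := mem_Icc_inv_of_abs_one_sub_le hκ h
    exact ⟨(inv_le_inv₀ hu hκ).mp hle_inv, (le_inv_comm₀ hκ hu).mp hκ_le⟩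

lemma div_mem_Icc_of_le_one_sub_KI {n : ℕ} {C : Matrix (Fin n) (Fin n) ℝ}
    (hpos : ∀ i j, 0 < C i j) {κ : ℝ} (hκ_pos : 0 < κ) (hκ : κ ≤ 1 - KI C) (i j r : Fin n) :
    C j r / C i r ∈ Set.Icc (κ * C j i) (κ⁻¹ * C j i) := by
  set u := C j r / (C j i * C i r) with hu_def
  have hu_pos : 0 < u := div_pos (hpos j r) (mul_pos (hpos j i) (hpos i r))
  have hu : u ∈ Set.Icc κ κ⁻¹ := by
    refine mem_Icc_inv_of_min_abs_one_sub_le hκ_pos hu_pos ?_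
    rw [hu_def, inv_div]
    linarith [le_KI C j r i]
  have hratio : C j r / C i r = u * C j i := by
    rw [hu_def]
    field_simp [(hpos j i).ne', (hpos i r).ne']
  rw [hratio]
  exact ⟨mul_le_mul_of_nonneg_right hu.1 (hpos j i).le,
    mul_le_mul_of_nonneg_right hu.2 (hpos j i).le⟩

lemma rpow_inv_card_prod_mem_Icc {ι : Type*} [Fintype ι] [Nonempty ι] {f : ι → ℝ} {a b : ℝ}
    (ha : 0 ≤ a) (hf : ∀ r, f r ∈ Set.Icc a b) :
    (∏ r, f r) ^ ((1 : ℝ) / Fintype.card ι) ∈ Set.Icc a b := by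
  set m := Fintype.card ι
  have hm : m ≠ 0 := Fintype.card_ne_zero
  have hexp : (0 : ℝ) ≤ (m : ℝ)⁻¹ := by positivity
  have hb : 0 ≤ b := ha.trans <| (hf (Classical.arbitrary ι)).1.trans (hf _).2
  have hlow : a ^ m ≤ ∏ r, f r :=
    calc a ^ m = ∏ _r : ι, a := by rw [prod_const, card_univ]
      _ ≤ ∏ r, f r := prod_le_prod (fun _ _ => ha) fun r _ => (hf r).1
  have hhigh : ∏ r, f r ≤ b ^ m :=
    calc ∏ r, f r ≤ ∏ _r : ι, b := prod_le_prod (fun r _ => ha.trans (hf r).1) fun r _ => (hf r).2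
      _ = b ^ m := by rw [prod_const, card_univ]
  rw [one_div]
  constructor
  · calc a = (a ^ m) ^ (m : ℝ)⁻¹ := (Real.pow_rpow_inv_natCast ha hm).symm
      _ ≤ _ := Real.rpow_le_rpow (by positivity) hlow hexp
  · calc _ ≤ (b ^ m) ^ (m : ℝ)⁻¹ :=
          Real.rpow_le_rpow (prod_nonneg fun r _ => ha.trans (hf r).1) hhigh hexp
      _ = b := Real.pow_rpow_inv_natCast hb hm

theorem gmm_ratio_bound_general {n : ℕ} (C : Matrix (Fin n) (Fin n) ℝ)
    (hpos : ∀ i j, 0 < C i j)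
    (κ : ℝ) (hκ : κ = 1 - KI C) (hκpos : 0 < κ)
    (wgm : Fin n → ℝ)
    (hgm : ∃ c : ℝ, 0 < c ∧ ∀ i, wgm i = c * (∏ r, C i r) ^ ((1 : ℝ) / n)) :
    ∀ i j : Fin n, κ * C j i ≤ wgm j / wgm i ∧ wgm j / wgm i ≤ κ⁻¹ * C j i := by
  obtain ⟨c, hc, hw⟩ := hgm
  intro i j
  have : Nonempty (Fin n) := ⟨i⟩
  have hratio : wgm j / wgm i = (∏ r, C j r / C i r) ^ ((1 : ℝ) / n) := by
    rw [hw i, hw j, mul_div_mul_left _ _ hc.ne', prod_div_distrib,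
      Real.div_rpow (prod_nonneg fun r _ => (hpos j r).le) (prod_nonneg fun r _ => (hpos i r).le)]
  have hmem := rpow_inv_card_prod_mem_Icc (mul_pos hκpos (hpos j i)).le
    (div_mem_Icc_of_le_one_sub_KI hpos hκpos hκ.le i j)
  rw [Fintype.card_fin] at hmem
  rwa [hratio]

theorem gmm_ratio_bound {n : ℕ} (hn : 2 < n) (C : Matrix (Fin n) (Fin n) ℝ)
    (hpos : ∀ i j, 0 < C i j) (hdiag : ∀ i, C i i = 1)
    (hrec : ∀ i j, C i j * C j i = 1)
    (κ : ℝ) (hκ : κ = 1 - KI C) (hκpos : 0 < κ)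
    (wgm : Fin n → ℝ) (hwpos : ∀ i, 0 < wgm i)
    (hgm : ∃ c : ℝ, 0 < c ∧ ∀ i, wgm i = c * (∏ r, C i r) ^ ((1 : ℝ) / n)) :
    ∀ i j : Fin n, κ * C j i ≤ wgm j / wgm i ∧ wgm j / wgm i ≤ κ⁻¹ * C j i :=
  gmm_ratio_bound_general C hpos κ hκ hκpos wgm hgm
end

section
/- For any two positive vectors w₁, w₂ ∈ ℝ^n, the compatibility indices satisfy the chain of inequalities: lower-comp(w₁,w₂) ≤ comp(w₁,w₂) ≤ upper-comp(w₁,w₂) ≤ compmax(w₁,w₂). -/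
open Finset

noncomputable def beta {n : ℕ} (w1 w2 : Fin n → ℝ) (i j : Fin n) : ℝ :=
  (w1 i / w1 j) * (w2 j / w2 i)

noncomputable def vcomp {n : ℕ} (w1 w2 : Fin n → ℝ) : ℝ :=
  (1 / (n : ℝ) ^ 2) * ∑ i, ∑ j, beta w1 w2 i j

noncomputable def vcompUpper {n : ℕ} (w1 w2 : Fin n → ℝ) : ℝ :=
  (2 / ((n : ℝ) * ((n : ℝ) - 1))) *
    ∑ i, ∑ j, if i < j then max (beta w1 w2 i j) (beta w1 w2 j i) else 0

noncomputable def vcompLower {n : ℕ} (w1 w2 : Fin n → ℝ) : ℝ :=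
  (2 / ((n : ℝ) * ((n : ℝ) - 1))) *
    ∑ i, ∑ j, if i < j then min (beta w1 w2 i j) (beta w1 w2 j i) else 0

noncomputable def vcompMax {n : ℕ} (w1 w2 : Fin n → ℝ) : ℝ :=
  ⨆ i : Fin n, ⨆ j : Fin n, beta w1 w2 i j

/-!
Since `β i j * β j i = 1`, every pair `i < j` satisfies
`min (β i j) (β j i) ≤ 1 ≤ max (β i j) (β j i)`. Splitting the double sum in `vcomp` into
the diagonal, where `β i i = 1`, and the pairs `i < j` exhibits `vcomp` as the convex
combination `(1 - 1/n) • m + (1/n) • 1`, where `m` is the average over pairs of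
`(β i j + β j i) / 2`. Both `m` and `1` lie between `vcompLower` and `vcompUpper`, hence so
does `vcomp`; and `vcompUpper` averages quantities bounded by `vcompMax`.
-/

section PairSum

variable {ι : Type*} [Fintype ι] [LinearOrder ι]

def pairSum (g : ι → ι → ℝ) : ℝ :=
  ∑ i, ∑ j, if i < j then g i j else 0

theorem sum_sum_eq_pairSum_add_sum_diag (f : ι → ι → ℝ) :
    ∑ i, ∑ j, f i j = pairSum (fun i j => f i j + f j i) + ∑ i, f i i := by
  have htrichotomy : ∀ i j, f i j = ((if i < j then f i j else 0) +
      if j < i then f i j else 0) + if i = j then f i j else 0 := by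
    intro i j
    rcases lt_trichotomy i j with h | rfl | h
    · simp [h, h.ne, h.not_gt]
    · simp
    · simp [h, h.ne', h.not_gt]
  calc ∑ i, ∑ j, f i j
      = ((∑ i, ∑ j, if i < j then f i j else 0) + ∑ i, ∑ j, if j < i then f i j else 0) +
          ∑ i, ∑ j, if i = j then f i j else 0 := by
        simp only [← sum_add_distrib, ← htrichotomy]
    _ = ((∑ i, ∑ j, if i < j then f i j else 0) + ∑ i, ∑ j, if i < j then f j i else 0) +
          ∑ i, f i i := by
        rw [sum_comm (f := fun i j => if j < i then f i j else 0)]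
        simp
    _ = pairSum (fun i j => f i j + f j i) + ∑ i, f i i := by
        simp only [pairSum, ← sum_add_distrib, ite_add_ite, add_zero]

theorem pairSum_mono {g h : ι → ι → ℝ} (hgh : ∀ i j, i < j → g i j ≤ h i j) :
    pairSum g ≤ pairSum h :=
  sum_le_sum fun i _ => sum_le_sum fun j _ => by
    split_ifs with hij
    exacts [hgh i j hij, le_rfl]

theorem pairSum_mul_left (c : ℝ) (g : ι → ι → ℝ) :
    pairSum (fun i j => c * g i j) = c * pairSum g := by
  simp only [pairSum, mul_sum, mul_ite, mul_zero]

theorem pairSum_div (g : ι → ι → ℝ) (c : ℝ) :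
    pairSum (fun i j => g i j / c) = pairSum g / c := by
  simp only [pairSum, sum_div, ite_div, zero_div]

theorem two_mul_pairSum_const (c : ℝ) :
    2 * pairSum (fun _ _ : ι => c) = (Fintype.card ι ^ 2 - Fintype.card ι) * c := by
  have h := sum_sum_eq_pairSum_add_sum_diag (fun _ _ : ι => c)
  simp only [sum_const, card_univ, nsmul_eq_mul, ← two_mul, pairSum_mul_left] at h
  linear_combination -h

end PairSum

section PairAvg

variable {n : ℕ}

/-- `vcompLower` and `vcompUpper` are, definitionally, `pairAvg` of the pairwise `min` and
`max`. -/
noncomputable def pairAvg (g : Fin n → Fin n → ℝ) : ℝ :=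
  (2 / ((n : ℝ) * ((n : ℝ) - 1))) * pairSum g

theorem pairAvg_mono {g h : Fin n → Fin n → ℝ} (hgh : ∀ i j, i < j → g i j ≤ h i j) :
    pairAvg g ≤ pairAvg h := by
  have hnorm : 0 ≤ 2 / ((n : ℝ) * ((n : ℝ) - 1)) := by
    rcases n with _ | n
    · simp
    · rw [Nat.cast_succ, add_sub_cancel_right]
      positivity
  exact mul_le_mul_of_nonneg_left (pairSum_mono hgh) hnorm

theorem pairAvg_const (hn : 2 ≤ n) (c : ℝ) : pairAvg (fun _ _ : Fin n => c) = c := by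
  have hn' : (2 : ℝ) ≤ n := by exact_mod_cast hn
  have hn0 : (n : ℝ) ≠ 0 := by linarith
  have hn1 : (n : ℝ) - 1 ≠ 0 := by linarith
  have h := two_mul_pairSum_const (ι := Fin n) c
  rw [Fintype.card_fin] at h
  rw [pairAvg]
  field_simp
  linear_combination h

theorem pairAvg_le_of_forall_le (hn : 2 ≤ n) {g : Fin n → Fin n → ℝ} {c : ℝ}
    (hg : ∀ i j, i < j → g i j ≤ c) : pairAvg g ≤ c :=
  (pairAvg_mono hg).trans_eq (pairAvg_const hn c)

theorem le_pairAvg_of_forall_le (hn : 2 ≤ n) {g : Fin n → Fin n → ℝ} {c : ℝ}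
    (hg : ∀ i j, i < j → c ≤ g i j) : c ≤ pairAvg g :=
  (pairAvg_const hn c).symm.trans_le (pairAvg_mono hg)

theorem avg_sum_sum_eq_combo_pairAvg (hn : 2 ≤ n) (f : Fin n → Fin n → ℝ)
    (hf : ∀ i, f i i = 1) :
    1 / (n : ℝ) ^ 2 * ∑ i, ∑ j, f i j =
      (1 - 1 / n) * pairAvg (fun i j => (f i j + f j i) / 2) + 1 / n * 1 := by
  have hn' : (2 : ℝ) ≤ n := by exact_mod_cast hn
  have hn0 : (n : ℝ) ≠ 0 := by linarith
  have hn1 : (n : ℝ) - 1 ≠ 0 := by linarith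
  rw [sum_sum_eq_pairSum_add_sum_diag, pairAvg, pairSum_div]
  simp only [hf, sum_const, card_univ, Fintype.card_fin, nsmul_eq_mul, mul_one]
  field_simp

end PairAvg

theorem min_le_one_of_mul_eq_one {a b : ℝ} (hab : a * b = 1) : min a b ≤ 1 := by
  by_contra! h
  nlinarith [lt_min_iff.mp h]

theorem one_le_max_of_mul_eq_one {a b : ℝ} (ha : 0 ≤ a) (hab : a * b = 1) : 1 ≤ max a b := by
  by_contra! h
  nlinarith [max_lt_iff.mp h]

theorem min_le_add_div_two (a b : ℝ) : min a b ≤ (a + b) / 2 := by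
  linarith [min_le_left a b, min_le_right a b]

theorem add_div_two_le_max (a b : ℝ) : (a + b) / 2 ≤ max a b := by
  linarith [le_max_left a b, le_max_right a b]

section Beta

variable {n : ℕ} {w1 w2 : Fin n → ℝ}

theorem beta_self (h1 : ∀ i, 0 < w1 i) (h2 : ∀ i, 0 < w2 i) (i : Fin n) :
    beta w1 w2 i i = 1 := by
  rw [beta, div_self (h1 i).ne', div_self (h2 i).ne', one_mul]

theorem beta_nonneg (h1 : ∀ i, 0 < w1 i) (h2 : ∀ i, 0 < w2 i) (i j : Fin n) :
    0 ≤ beta w1 w2 i j :=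
  (mul_pos (div_pos (h1 i) (h1 j)) (div_pos (h2 j) (h2 i))).le

theorem beta_mul_beta_swap (h1 : ∀ i, 0 < w1 i) (h2 : ∀ i, 0 < w2 i) (i j : Fin n) :
    beta w1 w2 i j * beta w1 w2 j i = 1 := by
  have := (h1 i).ne'; have := (h1 j).ne'; have := (h2 i).ne'; have := (h2 j).ne'
  simp only [beta]
  field_simp

theorem beta_le_vcompMax (i j : Fin n) : beta w1 w2 i j ≤ vcompMax w1 w2 :=
  (le_ciSup (Set.finite_range _).bddAbove j).trans
    (le_ciSup (f := fun i => ⨆ j, beta w1 w2 i j) (Set.finite_range _).bddAbove i)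

theorem vcomp_eq_combo (hn : 2 ≤ n) (h1 : ∀ i, 0 < w1 i) (h2 : ∀ i, 0 < w2 i) :
    vcomp w1 w2 =
      ((1 : ℝ) - 1 / n) • pairAvg (fun i j => (beta w1 w2 i j + beta w1 w2 j i) / 2) +
        (1 / n : ℝ) • (1 : ℝ) := by
  simpa only [vcomp, smul_eq_mul] using avg_sum_sum_eq_combo_pairAvg hn _ (beta_self h1 h2)

end Beta

theorem vcompat_chain {n : ℕ} (hn : 2 ≤ n) (w1 w2 : Fin n → ℝ)
    (h1 : ∀ i, 0 < w1 i) (h2 : ∀ i, 0 < w2 i) :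
    vcompLower w1 w2 ≤ vcomp w1 w2 ∧
      vcomp w1 w2 ≤ vcompUpper w1 w2 ∧
        vcompUpper w1 w2 ≤ vcompMax w1 w2 := by
  set m := pairAvg (fun i j => (beta w1 w2 i j + beta w1 w2 j i) / 2)
  have hweight : 0 ≤ 1 / (n : ℝ) := by positivity
  have hweight' : 0 ≤ 1 - 1 / (n : ℝ) := by
    rw [sub_nonneg, div_le_one₀ (by positivity)]
    exact_mod_cast (by omega : 1 ≤ n)
  have hlower : vcompLower w1 w2 ≤ min m 1 :=
    le_min (pairAvg_mono fun i j _ => min_le_add_div_two _ _)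
      (pairAvg_le_of_forall_le hn fun i j _ =>
        min_le_one_of_mul_eq_one (beta_mul_beta_swap h1 h2 i j))
  have hupper : max m 1 ≤ vcompUpper w1 w2 :=
    max_le (pairAvg_mono fun i j _ => add_div_two_le_max _ _)
      (le_pairAvg_of_forall_le hn fun i j _ =>
        one_le_max_of_mul_eq_one (beta_nonneg h1 h2 i j) (beta_mul_beta_swap h1 h2 i j))
  rw [vcomp_eq_combo hn h1 h2]
  refine ⟨hlower.trans (Convex.min_le_combo _ _ hweight' hweight (by ring)),
    (Convex.combo_le_max _ _ hweight' hweight (by ring)).trans hupper,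
    pairAvg_le_of_forall_le hn fun i j _ => max_le (beta_le_vcompMax i j) (beta_le_vcompMax j i)⟩
end

section
/- Let C be a reciprocal PC matrix with KI(C) > 0 and κ = 1 − KI(C) ∈ (0,1). Then the normalized EVM and GMM priority vectors w_ev and w_gm of C satisfy lower-comp(w_ev,w_gm) ≥ κ² > 0 and compmax(w_ev,w_gm) ≤ 1/κ², so the compatibility of the two rankings lies in the interval [κ², 1/κ²]. -/
open Finset

lemma minabs_bound {t κ : ℝ} (ht : 0 < t) (hκ : 0 < κ)
    (h : min |1 - t| |1 - 1/t| ≤ 1 - κ) : κ ≤ t ∧ t ≤ 1/κ := by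
  have h1t : 0 < 1/t := by positivity
  rcases min_le_iff.mp h with h' | h'
  · obtain ⟨ha, hb⟩ := abs_le.mp h'
    refine ⟨by linarith, ?_⟩
    rw [le_div_iff₀ hκ]
    nlinarith [sq_nonneg (κ - 1)]
  · obtain ⟨ha, hb⟩ := abs_le.mp h'
    have h2 : κ * t ≤ 1 := by
      have h2' : κ ≤ 1/t := by linarith
      rw [le_div_iff₀ ht] at h2'; linarith
    have h4 : 1 ≤ t * (2 - κ) := by
      have h3 : 1/t ≤ 2 - κ := by linarith
      rw [div_le_iff₀ ht] at h3; linarith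
    refine ⟨?_, by rw [le_div_iff₀ hκ]; linarith⟩
    nlinarith [sq_nonneg (1 - κ)]

lemma count_lt_pairs (n : ℕ) :
    (∑ i : Fin n, ∑ j : Fin n, (if i < j then (1:ℝ) else 0)) = n * (n - 1) / 2 := by
  have hswap : (∑ i : Fin n, ∑ j : Fin n, (if j < i then (1:ℝ) else 0)) =
      ∑ i : Fin n, ∑ j : Fin n, (if i < j then (1:ℝ) else 0) := by
    rw [Finset.sum_comm]
  have key : (∑ i : Fin n, ∑ j : Fin n, (if i < j then (1:ℝ) else 0)) +
      (∑ i : Fin n, ∑ j : Fin n, (if j < i then (1:ℝ) else 0)) = (n : ℝ) * n - n := by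
    rw [← Finset.sum_add_distrib]
    have hrow : ∀ i : Fin n, (∑ j : Fin n, (if i < j then (1:ℝ) else 0)) +
        (∑ j : Fin n, (if j < i then (1:ℝ) else 0)) = (n : ℝ) - 1 := by
      intro i
      rw [← Finset.sum_add_distrib]
      have h1 : ∀ j : Fin n, ((if i < j then (1:ℝ) else 0) + (if j < i then (1:ℝ) else 0))
          = (if i = j then 0 else 1) := by
        intro j
        rcases lt_trichotomy i j with h | h | h
        · simp [h, not_lt.mpr h.le, h.ne]
        · simp [h]
        · simp [h, not_lt.mpr h.le, h.ne']
      rw [Finset.sum_congr rfl fun j _ => h1 j]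
      have h2 : (∑ j : Fin n, (if i = j then (0:ℝ) else 1)) =
          (∑ j : Fin n, (1:ℝ)) - (∑ j : Fin n, (if i = j then (1:ℝ) else 0)) := by
        rw [← Finset.sum_sub_distrib]
        refine Finset.sum_congr rfl fun j _ => by split_ifs <;> ring
      rw [h2, Finset.sum_ite_eq Finset.univ i (fun _ => (1:ℝ))]
      simp
    rw [Finset.sum_congr rfl fun i _ => hrow i]
    rw [Finset.sum_const, Finset.card_univ, Fintype.card_fin]
    push_cast
    ring
  rw [hswap] at key
  linarith

theorem evm_gmm_compat_interval {n : ℕ} (hn : 2 < n) (C : Matrix (Fin n) (Fin n) ℝ)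
    (hpos : ∀ i j, 0 < C i j) (hdiag : ∀ i, C i i = 1)
    (hrec : ∀ i j, C i j * C j i = 1)
    (hKIpos : 0 < KI C)
    (κ : ℝ) (hκ : κ = 1 - KI C) (hκpos : 0 < κ)
    (wev : Fin n → ℝ) (hwev : ∀ i, 0 < wev i) (lam : ℝ)
    (hev : ∀ i, (∑ r, C i r * wev r) = lam * wev i)
    (wgm : Fin n → ℝ) (hwgm : ∀ i, 0 < wgm i)
    (hgm : ∃ c : ℝ, 0 < c ∧ ∀ i, wgm i = c * (∏ r, C i r) ^ ((1 : ℝ) / n)) :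
    κ ^ 2 ≤ vcompLower wev wgm ∧ vcompMax wev wgm ≤ 1 / κ ^ 2 := by
  have hn0 : (0:ℕ) < n := by omega
  have hnR : (2:ℝ) < n := by exact_mod_cast hn
  haveI : Nonempty (Fin n) := ⟨⟨0, hn0⟩⟩
  -- triad bound
  have htriad : ∀ i j k : Fin n, κ * (C i k * C k j) ≤ C i j ∧ C i j ≤ (C i k * C k j) / κ := by
    intro i j k
    have hden : 0 < C i k * C k j := mul_pos (hpos i k) (hpos k j)
    have ht : 0 < C i j / (C i k * C k j) := div_pos (hpos i j) hden
    have hle : min |1 - C i j / (C i k * C k j)| |1 - (C i k * C k j) / C i j| ≤ KI C := by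
      unfold KI
      have hk := le_ciSup (f := fun k : Fin n => min |1 - C i j / (C i k * C k j)| |1 - (C i k * C k j) / C i j|) (Finite.bddAbove_range _) k
      have hj := le_ciSup (f := fun j : Fin n => ⨆ k : Fin n, min |1 - C i j / (C i k * C k j)| |1 - (C i k * C k j) / C i j|) (Finite.bddAbove_range _) j
      have hi := le_ciSup (f := fun i : Fin n => ⨆ j : Fin n, ⨆ k : Fin n, min |1 - C i j / (C i k * C k j)| |1 - (C i k * C k j) / C i j|) (Finite.bddAbove_range _) i
      exact hk.trans (hj.trans hi)
    have hrw : (1 : ℝ) / (C i j / (C i k * C k j)) = (C i k * C k j) / C i j := one_div_div _ _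
    have h' : min |1 - C i j / (C i k * C k j)| |1 - 1 / (C i j / (C i k * C k j))| ≤ 1 - κ := by
      rw [hrw]; rw [hκ] at *; linarith
    obtain ⟨h1, h2⟩ := minabs_bound ht hκpos h'
    constructor
    · rw [le_div_iff₀ hden] at h1; linarith
    · rw [div_le_div_iff₀ hden hκpos] at h2
      rw [le_div_iff₀ hκpos]; linarith
  -- lam positive
  have hlam : 0 < lam := by
    have i0 : Fin n := ⟨0, hn0⟩
    have hsum : 0 < ∑ r, C i0 r * wev r :=
      Finset.sum_pos (fun r _ => mul_pos (hpos i0 r) (hwev r)) ⟨i0, Finset.mem_univ i0⟩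
    rw [hev i0] at hsum
    nlinarith [hwev i0]
  -- EVM ratio bound
  have hev_bound : ∀ i j : Fin n, κ * C i j * wev j ≤ wev i ∧ wev i ≤ C i j / κ * wev j := by
    intro i j
    have hup : ∑ r, C i r * wev r ≤ ∑ r, (C i j / κ * C j r) * wev r := by
      refine Finset.sum_le_sum fun r _ => ?_
      refine mul_le_mul_of_nonneg_right ?_ (hwev r).le
      calc C i r ≤ (C i j * C j r) / κ := (htriad i r j).2
        _ = C i j / κ * C j r := by ring
    have hlo : ∑ r, (κ * C i j * C j r) * wev r ≤ ∑ r, C i r * wev r := by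
      refine Finset.sum_le_sum fun r _ => ?_
      refine mul_le_mul_of_nonneg_right ?_ (hwev r).le
      calc κ * C i j * C j r = κ * (C i j * C j r) := by ring
        _ ≤ C i r := (htriad i r j).1
    have hru : ∑ r, (C i j / κ * C j r) * wev r = C i j / κ * (lam * wev j) := by
      rw [← hev j, Finset.mul_sum]
      congr 1; ext r; ring
    have hrl : ∑ r, (κ * C i j * C j r) * wev r = κ * C i j * (lam * wev j) := by
      rw [← hev j, Finset.mul_sum]
      congr 1; ext r; ring
    rw [hru, hev i] at hup
    rw [hrl, hev i] at hlo
    constructor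
    · have := (mul_le_mul_iff_right₀ hlam).mp (by linarith [hlo] : lam * (κ * C i j * wev j) ≤ lam * wev i)
      linarith
    · have := (mul_le_mul_iff_right₀ hlam).mp (by linarith [hup] : lam * wev i ≤ lam * (C i j / κ * wev j))
      linarith
  -- GMM ratio bound
  obtain ⟨c, hc, hgmeq⟩ := hgm
  have hgm_bound : ∀ i j : Fin n, κ * C i j * wgm j ≤ wgm i ∧ wgm i ≤ C i j / κ * wgm j := by
    intro i j
    set Pi := ∏ r, C i r with hPi
    set Pj := ∏ r, C j r with hPj
    have hPip : 0 < Pi := Finset.prod_pos fun r _ => hpos i r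
    have hPjp : 0 < Pj := Finset.prod_pos fun r _ => hpos j r
    have hne : (n : ℝ) ≠ 0 := by positivity
    have hroot : ∀ a : ℝ, 0 ≤ a → ((a ^ n : ℝ)) ^ ((1:ℝ)/n) = a := by
      intro a ha
      rw [← Real.rpow_natCast a n, ← Real.rpow_mul ha]
      rw [mul_one_div, div_self hne, Real.rpow_one]
    have hlow : (κ * C i j) ^ n * Pj ≤ Pi := by
      have : ∏ r, (κ * C i j * C j r) ≤ Pi := by
        refine Finset.prod_le_prod
          (fun r _ => (mul_pos (mul_pos hκpos (hpos i j)) (hpos j r)).le) fun r _ => ?_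
        calc κ * C i j * C j r = κ * (C i j * C j r) := by ring
          _ ≤ C i r := (htriad i r j).1
      calc (κ * C i j) ^ n * Pj = ∏ r, (κ * C i j * C j r) := by
            rw [Finset.prod_mul_distrib, Finset.prod_const, Finset.card_univ, Fintype.card_fin]
        _ ≤ Pi := this
    have hhigh : Pi ≤ (C i j / κ) ^ n * Pj := by
      have : Pi ≤ ∏ r, (C i j / κ * C j r) := by
        refine Finset.prod_le_prod (fun r _ => (hpos i r).le) fun r _ => ?_
        have := (htriad i r j).2
        calc C i r ≤ (C i j * C j r) / κ := this
          _ = C i j / κ * C j r := by ring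
      calc Pi ≤ ∏ r, (C i j / κ * C j r) := this
        _ = (C i j / κ) ^ n * Pj := by
            rw [Finset.prod_mul_distrib, Finset.prod_const, Finset.card_univ, Fintype.card_fin]
    constructor
    · rw [hgmeq i, hgmeq j]
      have hb : (0:ℝ) ≤ (κ * C i j) ^ n := (pow_pos (mul_pos hκpos (hpos i j)) n).le
      have h1 : ((κ * C i j) ^ n * Pj) ^ ((1:ℝ)/n) ≤ Pi ^ ((1:ℝ)/n) :=
        Real.rpow_le_rpow (mul_nonneg hb hPjp.le) hlow (by positivity)
      rw [Real.mul_rpow hb hPjp.le, hroot _ (mul_pos hκpos (hpos i j)).le] at h1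
      calc κ * C i j * (c * Pj ^ ((1:ℝ)/n)) = c * (κ * C i j * Pj ^ ((1:ℝ)/n)) := by ring
        _ ≤ c * Pi ^ ((1:ℝ)/n) := by
            exact mul_le_mul_of_nonneg_left h1 hc.le
    · rw [hgmeq i, hgmeq j]
      have hb : (0:ℝ) ≤ (C i j / κ) ^ n := (pow_pos (div_pos (hpos i j) hκpos) n).le
      have h1 : Pi ^ ((1:ℝ)/n) ≤ ((C i j / κ) ^ n * Pj) ^ ((1:ℝ)/n) :=
        Real.rpow_le_rpow hPip.le hhigh (by positivity)
      rw [Real.mul_rpow hb hPjp.le, hroot _ (div_pos (hpos i j) hκpos).le] at h1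
      calc c * Pi ^ ((1:ℝ)/n) ≤ c * (C i j / κ * Pj ^ ((1:ℝ)/n)) :=
            mul_le_mul_of_nonneg_left h1 hc.le
        _ = C i j / κ * (c * Pj ^ ((1:ℝ)/n)) := by ring
  -- beta bound
  have hbeta : ∀ i j : Fin n, κ ^ 2 ≤ beta wev wgm i j ∧ beta wev wgm i j ≤ 1 / κ ^ 2 := by
    intro i j
    have hev1 : κ * C i j ≤ wev i / wev j := by
      rw [le_div_iff₀ (hwev j)]; exact (hev_bound i j).1
    have hev2 : wev i / wev j ≤ C i j / κ := by
      rw [div_le_iff₀ (hwev j)]; exact (hev_bound i j).2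
    have hgm1 : κ * C j i ≤ wgm j / wgm i := by
      rw [le_div_iff₀ (hwgm i)]; exact (hgm_bound j i).1
    have hgm2 : wgm j / wgm i ≤ C j i / κ := by
      rw [div_le_iff₀ (hwgm i)]; exact (hgm_bound j i).2
    have hCC : C i j * C j i = 1 := hrec i j
    constructor
    · have h := mul_le_mul hev1 hgm1 (mul_pos hκpos (hpos j i)).le
        (div_pos (hwev i) (hwev j)).le
      calc κ ^ 2 = κ * C i j * (κ * C j i) := by rw [show κ * C i j * (κ * C j i) = κ^2 * (C i j * C j i) by ring, hCC, mul_one]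
        _ ≤ (wev i / wev j) * (wgm j / wgm i) := h
        _ = beta wev wgm i j := rfl
    · have h := mul_le_mul hev2 hgm2 (div_pos (hwgm j) (hwgm i)).le
        (div_pos (hpos i j) hκpos).le
      calc beta wev wgm i j = (wev i / wev j) * (wgm j / wgm i) := rfl
        _ ≤ (C i j / κ) * (C j i / κ) := h
        _ = 1 / κ ^ 2 := by
            field_simp; ring
            nlinarith [hCC]
  constructor
  · -- lower bound
    unfold vcompLower
    have hterm : ∀ i j : Fin n, (if i < j then κ^2 else 0) ≤
        (if i < j then min (beta wev wgm i j) (beta wev wgm j i) else 0) := by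
      intro i j
      split_ifs
      · exact le_min (hbeta i j).1 (hbeta j i).1
      · exact le_rfl
    have hsum : κ^2 * ((n:ℝ) * ((n:ℝ) - 1) / 2) ≤
        ∑ i, ∑ j, if i < j then min (beta wev wgm i j) (beta wev wgm j i) else 0 := by
      calc κ^2 * ((n:ℝ) * ((n:ℝ) - 1) / 2)
          = ∑ i : Fin n, ∑ j : Fin n, (if i < j then κ^2 else 0) := by
            rw [show (∑ i : Fin n, ∑ j : Fin n, (if i < j then κ^2 else 0))
                = κ^2 * ∑ i : Fin n, ∑ j : Fin n, (if i < j then (1:ℝ) else 0) by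
              rw [Finset.mul_sum]; congr 1; ext i
              rw [Finset.mul_sum]; congr 1; ext j
              split_ifs <;> ring]
            rw [count_lt_pairs]
        _ ≤ _ := Finset.sum_le_sum fun i _ => Finset.sum_le_sum fun j _ => hterm i j
    have hn1 : (0:ℝ) < (n:ℝ) - 1 := by linarith
    have hnn : (0:ℝ) < (n:ℝ) := by linarith
    have hfac : 0 < 2 / ((n:ℝ) * ((n:ℝ) - 1)) := div_pos two_pos (mul_pos hnn hn1)
    calc κ^2 = (2 / ((n:ℝ) * ((n:ℝ) - 1))) * (κ^2 * ((n:ℝ) * ((n:ℝ) - 1) / 2)) := by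
          field_simp
      _ ≤ _ := mul_le_mul_of_nonneg_left hsum hfac.le
  · -- upper bound
    unfold vcompMax
    refine ciSup_le fun i => ciSup_le fun j => (hbeta i j).2
end
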